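/- arXiv:2306.14034 — 2 statements merged into one kernel-verified Lean document; each statement's English description precedes it below -/
import Mathlib

section
/- Let Λ be a numerical semigroup of rank k = k(Λ) with conductor c = c(Λ), and let λ_s be a minimal generator of Λ with λ_s > c (so s > k); set Λ̃ = Λ∖{λ_s}, a numerical semigroup with conductor λ_s + 1 and rank s. Then for every p with k ≤ p ≤ s−1, the set of order-p seeds of Λ̃ (seeds taken with respect to Λ̃) is: {λ_s+1, λ_s+2} if p = s−1; {λ_s+1} if p = s−2; and empty if k ≤ p < s−2. -/
/-!
Since every integer `≥ c` lies in `Λ`, the rank `k` is the number of elements below `c`, and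
`λ_{k+t} = c + t`. Deleting `λ_s` leaves the indices below `s` untouched, so for `k ≤ p < s` we get
`λ̃_p = λ_p = λ_s - (s - p)`, while above `λ̃_p` the elements of `Λ̃` are all integers except `λ_s`.
By monotonicity of `j ↦ λ̃_j`, `y` is then an order-`p` seed iff `y > λ_s` and `y + λ̃_p` is not
`a + b` with `λ̃_p < a ≤ b < y`, `a, b ≠ λ_s`. One of the splits `(λ̃_p + 1, y - 1)` and
`(λ̃_p + 2, y - 2)` is admissible except in the three listed cases.
-/

/-- A numerical semigroup: a cofinite submonoid of ℕ, viewed as a set of naturals. -/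
def IsNumericalSemigroup (S : Set ℕ) : Prop :=
  0 ∈ S ∧ (∀ a ∈ S, ∀ b ∈ S, a + b ∈ S) ∧ ∃ N : ℕ, ∀ n : ℕ, N ≤ n → n ∈ S

/-- The conductor: the smallest `N` such that every `n ≥ N` belongs to `S`. -/
noncomputable def sgConductor (S : Set ℕ) : ℕ :=
  sInf {N : ℕ | ∀ n : ℕ, N ≤ n → n ∈ S}

/-- The genus: the number of gaps. -/
noncomputable def sgGenus (S : Set ℕ) : ℕ :=
  Sᶜ.ncard

/-- The rank `k(Λ) = c(Λ) - g(Λ)`. -/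
noncomputable def sgRank (S : Set ℕ) : ℕ :=
  sgConductor S - sgGenus S

/-- The multiplicity: the smallest nonzero element. -/
noncomputable def sgMultiplicity (S : Set ℕ) : ℕ :=
  sInf {n : ℕ | n ∈ S ∧ n ≠ 0}

/-- The Frobenius number: the largest gap, i.e. the conductor minus one. -/
noncomputable def sgFrobenius (S : Set ℕ) : ℕ :=
  sgConductor S - 1

/-- `sgElem S j` is the element `λ_j` of `S = {λ_0 = 0 < λ_1 < λ_2 < ⋯}`. -/
noncomputable def sgElem (S : Set ℕ) (j : ℕ) : ℕ :=
  Nat.nth (· ∈ S) j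

/-- The jump `u_j = λ_{j+1} - λ_j`. -/
noncomputable def sgJump (S : Set ℕ) (j : ℕ) : ℕ :=
  sgElem S (j + 1) - sgElem S j

/-- The left elements: elements of `S` smaller than the Frobenius number. -/
def sgLeftElements (S : Set ℕ) : Set ℕ :=
  {x : ℕ | x ∈ S ∧ x + 1 < sgConductor S}

/-- A minimal generator: a nonzero element not the sum of two nonzero elements. -/
def IsMinimalGenerator (S : Set ℕ) (x : ℕ) : Prop :=
  x ∈ S ∧ x ≠ 0 ∧ ¬ ∃ a ∈ S, ∃ b ∈ S, a ≠ 0 ∧ b ≠ 0 ∧ a + b = x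

/-- A right generator: a minimal generator larger than the Frobenius number. -/
def IsRightGenerator (S : Set ℕ) (x : ℕ) : Prop :=
  IsMinimalGenerator S x ∧ sgFrobenius S < x

/-- A strong generator: a right generator `μ` such that `μ + m(Λ)` is a minimal
generator of `Λ ∖ {μ}`. -/
noncomputable def IsStrongGenerator (S : Set ℕ) (x : ℕ) : Prop :=
  IsRightGenerator S x ∧ IsMinimalGenerator (S \ {x}) (x + sgMultiplicity S)

/-- A new generator of `Λ`: a minimal generator of `Λ` that is not a minimal
generator of `Λ ∪ {F(Λ)}`. -/
noncomputable def IsNewGenerator (S : Set ℕ) (x : ℕ) : Prop :=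
  IsMinimalGenerator S x ∧ ¬ IsMinimalGenerator (S ∪ {sgFrobenius S}) x

/-- `x` (an element `λ_s ≥ c(Λ)`) is an order-`p` seed of `Λ` if
`x + λ_p ≠ λ_i + λ_j` for all `p < i ≤ j < s`, i.e. for all `i ≤ j` with
`p < i` and `λ_j < x`. -/
noncomputable def IsSeed (S : Set ℕ) (p x : ℕ) : Prop :=
  sgConductor S ≤ x ∧ ∀ i j : ℕ, p < i → i ≤ j → sgElem S j < x →
    x + sgElem S p ≠ sgElem S i + sgElem S j

/-- `T` is a child of `S`: obtained by removing one right generator. -/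
def IsChild (T S : Set ℕ) : Prop :=
  ∃ μ : ℕ, IsRightGenerator S μ ∧ T = S \ {μ}

/-- A grandchild: a child of a child. -/
def IsGrandchild (T S : Set ℕ) : Prop :=
  ∃ C : Set ℕ, IsChild C S ∧ IsChild T C

/-- A great-grandchild: a child of a grandchild. -/
def IsGreatGrandchild (T S : Set ℕ) : Prop :=
  ∃ C : Set ℕ, IsGrandchild C S ∧ IsChild T C

/-- `⟨a,b,c,…⟩|_κ`: the smallest numerical semigroup containing a given set. -/
def sgClosure (A : Set ℕ) : Set ℕ :=
  ⋂₀ {S : Set ℕ | IsNumericalSemigroup S ∧ A ⊆ S}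

lemma mem_of_sgConductor_le {S : Set ℕ} (hS : ∃ N, ∀ n, N ≤ n → n ∈ S) {n : ℕ}
    (hn : sgConductor S ≤ n) : n ∈ S :=
  Nat.sInf_mem (s := {N : ℕ | ∀ n : ℕ, N ≤ n → n ∈ S}) hS n hn

lemma sgConductor_eq_succ {T : Set ℕ} {N : ℕ} (hT : ∀ n, N < n → n ∈ T) (hN : N ∉ T) :
    sgConductor T = N + 1 :=
  le_antisymm (Nat.sInf_le hT)
    (not_lt.mp fun hlt => hN (mem_of_sgConductor_le ⟨N + 1, hT⟩ (Nat.lt_succ_iff.mp hlt)))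

lemma sgElem_count {S : Set ℕ} [DecidablePred (· ∈ S)] {x : ℕ} (hx : x ∈ S) :
    sgElem S (Nat.count (· ∈ S) x) = x :=
  Nat.nth_count hx

lemma count_sgElem {S : Set ℕ} [DecidablePred (· ∈ S)] (hS : S.Infinite) (j : ℕ) :
    Nat.count (· ∈ S) (sgElem S j) = j :=
  Nat.count_nth_of_infinite (p := (· ∈ S)) hS j

lemma Nat.count_diff_singleton_of_le {S : Set ℕ} [DecidablePred (· ∈ S)] {μ n : ℕ}
    [DecidablePred (· ∈ S \ {μ})] (hn : n ≤ μ) :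
    Nat.count (· ∈ S \ {μ}) n = Nat.count (· ∈ S) n :=
  le_antisymm (Nat.count_mono_left fun _ _ h => h.1)
    (Nat.count_mono_left fun _ hk h => ⟨h, by simp only [Set.mem_singleton_iff]; omega⟩)

lemma sgElem_diff_singleton_of_lt {S : Set ℕ} (hS : S.Infinite) {s j : ℕ} (hj : j < s) :
    sgElem (S \ {sgElem S s}) j = sgElem S j := by
  classical
  have hlt : sgElem S j < sgElem S s := Nat.nth_strictMono hS hj
  have hmem : sgElem S j ∈ S \ {sgElem S s} :=
    ⟨Nat.nth_mem_of_infinite hS j, by simp only [Set.mem_singleton_iff]; omega⟩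
  have hcount : Nat.count (· ∈ S \ {sgElem S s}) (sgElem S j) = j := by
    rw [Nat.count_diff_singleton_of_le (S := S) hlt.le, count_sgElem hS]
  simpa only [hcount] using sgElem_count hmem

lemma isSeed_iff {T : Set ℕ} (hT : T.Infinite) {p y : ℕ} :
    IsSeed T p y ↔ sgConductor T ≤ y ∧
      ∀ a ∈ T, ∀ b ∈ T, sgElem T p < a → a ≤ b → b < y → y + sgElem T p ≠ a + b := by
  classical
  have hmono : StrictMono (sgElem T) := Nat.nth_strictMono hT
  refine and_congr_right fun _ => ⟨fun h a ha b hb hpa hab hby => ?_, fun h i j hpi hij hjy => ?_⟩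
  · obtain ⟨i, rfl⟩ : ∃ i, sgElem T i = a := ⟨_, sgElem_count ha⟩
    obtain ⟨j, rfl⟩ : ∃ j, sgElem T j = b := ⟨_, sgElem_count hb⟩
    exact h i j (hmono.lt_iff_lt.mp hpa) (hmono.le_iff_le.mp hab) hby
  · exact h _ (Nat.nth_mem_of_infinite hT i) _ (Nat.nth_mem_of_infinite hT j) (hmono hpi)
      (hmono.monotone hij) hjy

lemma forall_add_ne_avoiding_iff {q μ y : ℕ} (hqμ : q < μ) :
    (μ < y ∧ ∀ a b, q < a → a ≤ b → b < y → a ≠ μ → b ≠ μ → y + q ≠ a + b) ↔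
      (q + 1 = μ ∧ (y = μ + 1 ∨ y = μ + 2)) ∨ (q + 2 = μ ∧ y = μ + 1) := by
  constructor
  · rintro ⟨hy, h⟩
    have h₁ := h (q + 1) (y - 1)
    have h₂ := h (q + 2) (y - 2)
    omega
  · rintro (⟨rfl, rfl | rfl⟩ | ⟨rfl, rfl⟩) <;> refine ⟨by omega, ?_⟩ <;> intros <;> omega

namespace IsNumericalSemigroup

variable {S : Set ℕ}

lemma mem_of_conductor_le (hS : IsNumericalSemigroup S) {n : ℕ} (hn : sgConductor S ≤ n) :
    n ∈ S :=
  mem_of_sgConductor_le hS.2.2 hn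

lemma infinite (hS : IsNumericalSemigroup S) : S.Infinite :=
  (Set.Ici_infinite _).mono fun _ => hS.mem_of_conductor_le

lemma rank_eq_count [DecidablePred (· ∈ S)] (hS : IsNumericalSemigroup S) :
    sgRank S = Nat.count (· ∈ S) (sgConductor S) := by
  have hgaps : Sᶜ = ↑({x ∈ Finset.range (sgConductor S) | x ∉ S}) := by
    ext x
    simp only [Set.mem_compl_iff, Finset.coe_filter, Finset.mem_range, Set.mem_ofPred_eq,
      iff_and_self]
    exact fun hx => not_le.mp fun h => hx (hS.mem_of_conductor_le h)
  have hsplit := Finset.card_filter_add_card_filter_not (s := Finset.range (sgConductor S))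
    (· ∈ S)
  rw [Finset.card_range] at hsplit
  rw [sgRank, sgGenus, hgaps, Set.ncard_coe_finset, Nat.count_eq_card_filter_range]
  omega

lemma elem_rank_add (hS : IsNumericalSemigroup S) (t : ℕ) :
    sgElem S (sgRank S + t) = sgConductor S + t := by
  classical
  have hcount : Nat.count (· ∈ S) (sgConductor S + t) = sgRank S + t := by
    rw [Nat.count_add, hS.rank_eq_count,
      Nat.count_of_forall fun _ _ => hS.mem_of_conductor_le (Nat.le_add_right _ _)]
  rw [← hcount, sgElem_count (hS.mem_of_conductor_le (Nat.le_add_right _ t))]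

lemma rank_lt_of_conductor_lt (hS : IsNumericalSemigroup S) {s : ℕ}
    (hs : sgConductor S < sgElem S s) : sgRank S < s := by
  by_contra! h
  have hle : sgElem S s ≤ sgElem S (sgRank S + 0) := (Nat.nth_strictMono hS.infinite).monotone h
  rw [hS.elem_rank_add] at hle
  omega

lemma diff_singleton {μ : ℕ} (hS : IsNumericalSemigroup S) (hμ : IsMinimalGenerator S μ) :
    IsNumericalSemigroup (S \ {μ}) := by
  obtain ⟨h0, hadd, N, hN⟩ := hS
  obtain ⟨-, hμ0, hirr⟩ := hμ
  refine ⟨⟨h0, Ne.symm hμ0⟩, fun a ha b hb => ⟨hadd a ha.1 b hb.1, fun hab => ?_⟩,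
    max N (μ + 1), fun n hn => ⟨hN n (le_of_max_le_left hn), ?_⟩⟩
  · rcases Nat.eq_zero_or_pos a with rfl | ha0
    · exact hb.2 (by simpa using hab)
    rcases Nat.eq_zero_or_pos b with rfl | hb0
    · exact ha.2 (by simpa using hab)
    exact hirr ⟨a, ha.1, b, hb.1, ha0.ne', hb0.ne', hab⟩
  · simp only [Set.mem_singleton_iff]
    omega

lemma conductor_diff_singleton (hS : IsNumericalSemigroup S) {μ : ℕ}
    (hμ : sgConductor S ≤ μ) : sgConductor (S \ {μ}) = μ + 1 :=
  sgConductor_eq_succ (fun n hn => ⟨hS.mem_of_conductor_le (by omega), by simp; omega⟩)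
    (by simp)

lemma isSeed_diff_singleton_iff (hS : IsNumericalSemigroup S) {μ p y : ℕ}
    (hcp : sgConductor S ≤ sgElem (S \ {μ}) p) (hpμ : sgElem (S \ {μ}) p < μ) :
    IsSeed (S \ {μ}) p y ↔ μ < y ∧ ∀ a b, sgElem (S \ {μ}) p < a → a ≤ b → b < y →
      a ≠ μ → b ≠ μ → y + sgElem (S \ {μ}) p ≠ a + b := by
  have hmem : ∀ a, sgElem (S \ {μ}) p < a → a ≠ μ → a ∈ S \ {μ} :=
    fun a hpa haμ => ⟨hS.mem_of_conductor_le (by omega), haμ⟩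
  rw [isSeed_iff (hS.infinite.sdiff (Set.finite_singleton μ)),
    hS.conductor_diff_singleton (by omega), Nat.succ_le_iff]
  exact and_congr_right fun _ =>
    ⟨fun h a b hpa hab hby ha hb => h a (hmem a hpa ha) b (hmem b (by omega) hb) hpa hab hby,
      fun h a ha b hb hpa hab hby => h a b hpa hab hby ha.2 hb.2⟩

end IsNumericalSemigroup

theorem statement7 (S : Set ℕ) (hS : IsNumericalSemigroup S)
    (s : ℕ) (hgen : IsMinimalGenerator S (sgElem S s))
    (hgt : sgConductor S < sgElem S s) :
    IsNumericalSemigroup (S \ {sgElem S s}) ∧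
    sgConductor (S \ {sgElem S s}) = sgElem S s + 1 ∧
    sgRank (S \ {sgElem S s}) = s ∧
    (∀ p : ℕ, sgRank S ≤ p → p ≤ s - 1 → ∀ y : ℕ,
      (IsSeed (S \ {sgElem S s}) p y ↔
        ((p = s - 1 ∧ (y = sgElem S s + 1 ∨ y = sgElem S s + 2)) ∨
         (p = s - 2 ∧ y = sgElem S s + 1)))) := by
  classical
  have hks := hS.rank_lt_of_conductor_lt hgt
  have hT := hS.diff_singleton hgen
  have hcT := hS.conductor_diff_singleton hgt.le
  refine ⟨hT, hcT, ?_, fun p hkp hps y => ?_⟩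
  · rw [hT.rank_eq_count, hcT, Nat.count_succ, Nat.count_diff_singleton_of_le (S := S) le_rfl,
      count_sgElem hS.infinite]
    simp
  · have hp : sgElem (S \ {sgElem S s}) p = sgElem S p :=
      sgElem_diff_singleton_of_lt hS.infinite (by omega)
    have hq := hS.elem_rank_add (p - sgRank S)
    have hμ := hS.elem_rank_add (s - sgRank S)
    rw [Nat.add_sub_cancel' hkp] at hq
    rw [Nat.add_sub_cancel' hks.le] at hμ
    rw [hS.isSeed_diff_singleton_iff (by omega) (by omega), hp,
      forall_add_ne_avoiding_iff (by omega)]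
    omega
end

section
/- For every integer m ≥ 2, the nontrivial ordinary numerical semigroup Λ = {0} ∪ {n ∈ ℕ : n ≥ m} has exactly C(m,3) + 3m + 1 great-grandchildren if m ∈ {2, 3}, and exactly C(m,3) + 3m + 3 great-grandchildren if m ≥ 4, where C(m,3) = m(m−1)(m−2)/6. -/
open Finset

lemma sgConductor_le_iff {S : Set ℕ} (hS : ∃ N, ∀ n, N ≤ n → n ∈ S) {N : ℕ} :
    sgConductor S ≤ N ↔ ∀ n, N ≤ n → n ∈ S :=
  ⟨fun h n hn => Nat.sInf_mem hS n (h.trans hn), fun h => Nat.sInf_le h⟩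

lemma sgFrobenius_lt_iff {S : Set ℕ} (hS : ∃ N, ∀ n, N ≤ n → n ∈ S) {x : ℕ} (hx : x ≠ 0) :
    sgFrobenius S < x ↔ ∀ n, x ≤ n → n ∈ S := by
  rw [sgFrobenius, ← sgConductor_le_iff hS]
  omega

lemma isRightGenerator_iff {S : Set ℕ} (hS : ∃ N, ∀ n, N ≤ n → n ∈ S) {x : ℕ} :
    IsRightGenerator S x ↔ IsMinimalGenerator S x ∧ ∀ n, x ≤ n → n ∈ S :=
  and_congr_right fun h => sgFrobenius_lt_iff hS h.2.1

lemma Finset.card_product_product_filter_lt {α : Type*} [LinearOrder α] (s : Finset α) :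
    #{x ∈ s ×ˢ s ×ˢ s | x.1 < x.2.1 ∧ x.2.1 < x.2.2} = (#s).choose 3 := by
  induction s using Finset.induction_on_max with
  | empty => simp
  | insert a s ha ih =>
    have hsplit : {x ∈ insert a s ×ˢ insert a s ×ˢ insert a s | x.1 < x.2.1 ∧ x.2.1 < x.2.2} =
        {x ∈ s ×ˢ s ×ˢ s | x.1 < x.2.1 ∧ x.2.1 < x.2.2} ∪
          {x ∈ s ×ˢ s | x.1 < x.2}.image (fun x => (x.1, x.2, a)) := by
      ext ⟨x, y, z⟩
      simp only [mem_filter, mem_product, mem_insert, mem_union, mem_image, Prod.mk.injEq,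
        Prod.exists]
      grind
    have hdisj : Disjoint {x ∈ s ×ˢ s ×ˢ s | x.1 < x.2.1 ∧ x.2.1 < x.2.2}
        ({x ∈ s ×ˢ s | x.1 < x.2}.image (fun x => (x.1, x.2, a))) := by
      simp only [disjoint_left, mem_filter, mem_product, mem_image]
      grind
    rw [hsplit, card_union_of_disjoint hdisj, card_image_of_injective _ (by intro x y; grind),
      ih, card_product_filter_lt, card_insert_of_notMem (fun h => (ha a h).false),
      Nat.choose_succ_succ, add_comm]

lemma eq_of_insert_eq_of_lt {a b c a' b' c' : ℕ} (hab : a < b) (hbc : b < c) (hab' : a' < b')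
    (hbc' : b' < c') (h : ({c, b, a} : Set ℕ) = {c', b', a'}) : (a, b, c) = (a', b', c') := by
  have hmem : ∀ x, x = c ∨ x = b ∨ x = a ↔ x = c' ∨ x = b' ∨ x = a' := by
    simpa [Set.ext_iff] using h
  have := (hmem a).1 (by simp); have := (hmem b).1 (by simp); have := (hmem c).1 (by simp)
  have := (hmem a').2 (by simp); have := (hmem b').2 (by simp); have := (hmem c').2 (by simp)
  rw [Prod.mk.injEq, Prod.mk.injEq]
  omega

def ordinarySemigroup (m : ℕ) : Set ℕ := {0} ∪ {n | m ≤ n}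

lemma mem_ordinarySemigroup {m x : ℕ} : x ∈ ordinarySemigroup m ↔ x = 0 ∨ m ≤ x := Iff.rfl

def Unsplittable (m : ℕ) (G : Set ℕ) (x : ℕ) : Prop :=
  ∀ p ∈ Icc m (x - m), p ∈ G ∨ x - p ∈ G

instance (m : ℕ) (G : Set ℕ) [∀ p, Decidable (p ∈ G)] (x : ℕ) :
    Decidable (Unsplittable m G x) :=
  inferInstanceAs (Decidable (∀ p ∈ Icc m (x - m), p ∈ G ∨ x - p ∈ G))

lemma Unsplittable.mem_or_mem {m x p : ℕ} {G : Set ℕ} (h : Unsplittable m G x) (hp : m ≤ p)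
    (hpx : p + m ≤ x) : p ∈ G ∨ x - p ∈ G :=
  h p (mem_Icc.2 ⟨hp, by omega⟩)

lemma unsplittable_empty_iff {m x : ℕ} : Unsplittable m ∅ x ↔ x < 2 * m := by
  simp only [Unsplittable, mem_Icc, Set.mem_empty_iff_false, or_self, imp_false, not_and,
    not_le]
  exact ⟨fun h => by have := h m le_rfl; omega, fun h p hp => by omega⟩

lemma exists_forall_mem_ordinarySemigroup_sdiff {m : ℕ} {G : Set ℕ} (hG : G.Finite) :
    ∃ N, ∀ n, N ≤ n → n ∈ ordinarySemigroup m \ G := by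
  obtain ⟨B, hB⟩ := hG.bddAbove
  exact ⟨m + B + 1, fun n hn =>
    ⟨mem_ordinarySemigroup.2 (Or.inr (by omega)), fun hnG => by have := hB hnG; omega⟩⟩

lemma isMinimalGenerator_ordinarySemigroup_sdiff_iff {m : ℕ} (hm : 0 < m) {G : Set ℕ} {x : ℕ} :
    IsMinimalGenerator (ordinarySemigroup m \ G) x ↔ m ≤ x ∧ x ∉ G ∧ Unsplittable m G x := by
  constructor
  · rintro ⟨⟨hx | hmx, hxG⟩, hx0, hsum⟩
    · exact absurd hx hx0
    refine ⟨hmx, hxG, fun p hp => ?_⟩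
    rw [mem_Icc] at hp
    by_contra! hpG
    exact hsum ⟨p, ⟨Or.inr hp.1, hpG.1⟩, x - p,
      ⟨mem_ordinarySemigroup.2 (Or.inr (by omega)), hpG.2⟩, by omega, by omega, by omega⟩
  · rintro ⟨hmx, hxG, hU⟩
    refine ⟨⟨Or.inr hmx, hxG⟩, by omega, ?_⟩
    rintro ⟨p, ⟨hp, hpG⟩, q, ⟨hq, hqG⟩, hp0, hq0, rfl⟩
    rw [mem_ordinarySemigroup] at hp hq
    rcases hU.mem_or_mem (p := p) (by omega) (by omega) with h | h
    · exact hpG h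
    · exact hqG (by simpa using h)

lemma isRightGenerator_ordinarySemigroup_sdiff_iff {m : ℕ} (hm : 0 < m) {G : Set ℕ}
    (hG : G.Finite) {x : ℕ} :
    IsRightGenerator (ordinarySemigroup m \ G) x ↔
      m ≤ x ∧ (∀ g ∈ G, g < x) ∧ Unsplittable m G x := by
  rw [isRightGenerator_iff (exists_forall_mem_ordinarySemigroup_sdiff hG),
    isMinimalGenerator_ordinarySemigroup_sdiff_iff hm]
  constructor
  · rintro ⟨⟨hmx, -, hU⟩, hge⟩
    exact ⟨hmx, fun g hg => by by_contra! h; exact (hge g h).2 hg, hU⟩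
  · rintro ⟨hmx, hlt, hU⟩
    refine ⟨⟨hmx, fun hx => (hlt x hx).false, hU⟩, fun n hn => ⟨?_, fun hnG => ?_⟩⟩
    · exact mem_ordinarySemigroup.2 (Or.inr (by omega))
    · have := hlt n hnG
      omega

lemma isChild_ordinarySemigroup_sdiff_iff {m : ℕ} (hm : 0 < m) {G : Set ℕ} (hG : G.Finite)
    {T : Set ℕ} :
    IsChild T (ordinarySemigroup m \ G) ↔
      ∃ x, (m ≤ x ∧ (∀ g ∈ G, g < x) ∧ Unsplittable m G x) ∧
        T = ordinarySemigroup m \ insert x G := by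
  simp only [IsChild, isRightGenerator_ordinarySemigroup_sdiff_iff hm hG, Set.sdiff_sdiff,
    Set.union_singleton]

lemma isChild_ordinarySemigroup_iff {m : ℕ} (hm : 0 < m) {T : Set ℕ} :
    IsChild T (ordinarySemigroup m) ↔
      ∃ x, (m ≤ x ∧ x < 2 * m) ∧ T = ordinarySemigroup m \ {x} := by
  simpa [unsplittable_empty_iff] using isChild_ordinarySemigroup_sdiff_iff hm Set.finite_empty

lemma eq_of_ordinarySemigroup_sdiff_eq {m : ℕ} {G G' : Set ℕ} (hG : ∀ g ∈ G, m ≤ g)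
    (hG' : ∀ g ∈ G', m ≤ g) (h : ordinarySemigroup m \ G = ordinarySemigroup m \ G') :
    G = G' := by
  ext x
  have := Set.ext_iff.1 h x
  simp only [Set.mem_sdiff, mem_ordinarySemigroup] at this
  have := hG x
  have := hG' x
  tauto

def IsRemovalTriple (m a b c : ℕ) : Prop :=
  m ≤ a ∧ a < 2 * m ∧ a < b ∧ b < c ∧ Unsplittable m {a} b ∧ Unsplittable m {b, a} c

instance (m a b c : ℕ) : Decidable (IsRemovalTriple m a b c) :=
  inferInstanceAs (Decidable (_ ∧ _))

lemma isGreatGrandchild_ordinarySemigroup_iff {m : ℕ} (hm : 0 < m) {T : Set ℕ} :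
    IsGreatGrandchild T (ordinarySemigroup m) ↔
      ∃ a b c, IsRemovalTriple m a b c ∧ T = ordinarySemigroup m \ {c, b, a} := by
  constructor
  · rintro ⟨C, ⟨B, hB, hC⟩, hT⟩
    obtain ⟨a, ⟨hma, ha⟩, rfl⟩ := (isChild_ordinarySemigroup_iff hm).1 hB
    obtain ⟨b, ⟨-, hab, hb⟩, rfl⟩ := (isChild_ordinarySemigroup_sdiff_iff hm (Set.toFinite _)).1 hC
    obtain ⟨c, ⟨-, hbc, hc⟩, rfl⟩ := (isChild_ordinarySemigroup_sdiff_iff hm (Set.toFinite _)).1 hT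
    exact ⟨a, b, c, ⟨hma, ha, hab a rfl, hbc b (Set.mem_insert _ _), hb, hc⟩, rfl⟩
  · rintro ⟨a, b, c, ⟨hma, ha, hab, hbc, hb, hc⟩, rfl⟩
    refine ⟨_, ⟨_, (isChild_ordinarySemigroup_iff hm).2 ⟨a, ⟨hma, ha⟩, rfl⟩,
      (isChild_ordinarySemigroup_sdiff_iff hm (Set.toFinite _)).2 ⟨b, ⟨by omega, ?_, hb⟩, rfl⟩⟩,
      (isChild_ordinarySemigroup_sdiff_iff hm (Set.toFinite _)).2 ⟨c, ⟨by omega, ?_, hc⟩, rfl⟩⟩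
    · simpa using hab
    · simp only [Set.mem_insert_iff, Set.mem_singleton_iff, forall_eq_or_imp, forall_eq]
      omega

lemma IsRemovalTriple.lt_two_mul_add_four {m a b c : ℕ} (hm : 0 < m) (h : IsRemovalTriple m a b c) :
    c < 2 * m + 4 := by
  obtain ⟨-, -, -, hbc, -, hc⟩ := h
  by_contra! hc4
  have h0 := hc.mem_or_mem (p := m) le_rfl (by omega)
  have h1 := hc.mem_or_mem (p := m + 1) (by omega) (by omega)
  have h2 := hc.mem_or_mem (p := m + 2) (by omega) (by omega)
  simp only [Set.mem_insert_iff, Set.mem_singleton_iff] at h0 h1 h2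
  omega

def removalTriples (m : ℕ) : Finset (ℕ × ℕ × ℕ) :=
  {t ∈ range (2 * m + 4) ×ˢ range (2 * m + 4) ×ˢ range (2 * m + 4) |
    IsRemovalTriple m t.1 t.2.1 t.2.2}

lemma mem_removalTriples {m a b c : ℕ} (hm : 0 < m) :
    (a, b, c) ∈ removalTriples m ↔ IsRemovalTriple m a b c := by
  simp only [removalTriples, mem_filter, mem_product, mem_range, and_iff_right_iff_imp]
  intro h
  have := h.lt_two_mul_add_four hm
  obtain ⟨-, -, hab, hbc, -, -⟩ := h
  omega

lemma ncard_greatGrandchildren_ordinarySemigroup {m : ℕ} (hm : 0 < m) :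
    {T | IsGreatGrandchild T (ordinarySemigroup m)}.ncard = #(removalTriples m) := by
  have himage : {T | IsGreatGrandchild T (ordinarySemigroup m)} =
      (fun t : ℕ × ℕ × ℕ => ordinarySemigroup m \ {t.2.2, t.2.1, t.1}) '' removalTriples m := by
    ext T
    simp [isGreatGrandchild_ordinarySemigroup_iff hm, mem_removalTriples hm, eq_comm]
  rw [himage, Set.InjOn.ncard_image, Set.ncard_coe_finset]
  rintro ⟨a, b, c⟩ ht ⟨a', b', c'⟩ ht' h
  rw [Finset.mem_coe, mem_removalTriples hm] at ht ht'
  obtain ⟨ha, -, hab, hbc, -, -⟩ := ht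
  obtain ⟨ha', -, hab', hbc', -, -⟩ := ht'
  refine eq_of_insert_eq_of_lt hab hbc hab' hbc' (eq_of_ordinarySemigroup_sdiff_eq ?_ ?_ h) <;>
  · simp only [Set.mem_insert_iff, Set.mem_singleton_iff, forall_eq_or_imp, forall_eq]
    omega

def exceptionalTriples (m : ℕ) : Finset (ℕ × ℕ × ℕ) :=
  (Ioo m (2 * m)).image (m, ·, 2 * m) ∪ (Ioc m (2 * m)).image (m, ·, 2 * m + 1) ∪
    (Ioo (m + 1) (2 * m)).image (m + 1, ·, 2 * m + 1) ∪
    {(m, m + 1, 2 * m + 2), (m + 1, m + 2, 2 * m + 2), (m, m + 1, 2 * m + 3),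
      (m, m + 2, 2 * m + 3), (m + 1, m + 3, 2 * m + 3), (m + 2, m + 3, 2 * m + 3)}

lemma mem_exceptionalTriples {m a b c : ℕ} :
    (a, b, c) ∈ exceptionalTriples m ↔
      (a = m ∧ m < b ∧ b < 2 * m ∧ c = 2 * m) ∨ (a = m ∧ m < b ∧ b ≤ 2 * m ∧ c = 2 * m + 1) ∨
      (a = m + 1 ∧ m + 1 < b ∧ b < 2 * m ∧ c = 2 * m + 1) ∨
      (a = m ∧ b = m + 1 ∧ c = 2 * m + 2) ∨ (a = m + 1 ∧ b = m + 2 ∧ c = 2 * m + 2) ∨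
      (a = m ∧ b = m + 1 ∧ c = 2 * m + 3) ∨ (a = m ∧ b = m + 2 ∧ c = 2 * m + 3) ∨
      (a = m + 1 ∧ b = m + 3 ∧ c = 2 * m + 3) ∨ (a = m + 2 ∧ b = m + 3 ∧ c = 2 * m + 3) := by
  simp only [exceptionalTriples, mem_union, mem_image, mem_Ioo, mem_Ioc, mem_insert,
    mem_singleton, Prod.mk.injEq]
  constructor
  · rintro (((⟨x, hx, rfl, rfl, rfl⟩ | ⟨x, hx, rfl, rfl, rfl⟩) | ⟨x, hx, rfl, rfl, rfl⟩) | h)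
    · exact Or.inl ⟨rfl, hx.1, hx.2, rfl⟩
    · exact Or.inr (Or.inl ⟨rfl, hx.1, hx.2, rfl⟩)
    · exact Or.inr (Or.inr (Or.inl ⟨rfl, hx.1, hx.2, rfl⟩))
    · exact Or.inr (Or.inr (Or.inr h))
  · rintro (⟨rfl, h1, h2, rfl⟩ | ⟨rfl, h1, h2, rfl⟩ | ⟨rfl, h1, h2, rfl⟩ | h)
    · exact Or.inl (Or.inl (Or.inl ⟨b, ⟨h1, h2⟩, rfl, rfl, rfl⟩))
    · exact Or.inl (Or.inl (Or.inr ⟨b, ⟨h1, h2⟩, rfl, rfl, rfl⟩))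
    · exact Or.inl (Or.inr ⟨b, ⟨h1, h2⟩, rfl, rfl, rfl⟩)
    · exact Or.inr h

lemma card_exceptionalTriples {m : ℕ} (hm : 2 ≤ m) : #(exceptionalTriples m) = 3 * m + 3 := by
  have hsix : #({(m, m + 1, 2 * m + 2), (m + 1, m + 2, 2 * m + 2), (m, m + 1, 2 * m + 3),
      (m, m + 2, 2 * m + 3), (m + 1, m + 3, 2 * m + 3), (m + 2, m + 3, 2 * m + 3)} :
      Finset (ℕ × ℕ × ℕ)) = 6 := by
    simp [card_insert_of_notMem]
  rw [exceptionalTriples, card_union_of_disjoint, card_union_of_disjoint, card_union_of_disjoint,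
    card_image_of_injective _ (fun x y => by simp), card_image_of_injective _ (fun x y => by simp),
    card_image_of_injective _ (fun x y => by simp), Nat.card_Ioo, Nat.card_Ioc, Nat.card_Ioo, hsix]
  · omega
  all_goals
    rw [disjoint_left]
    rintro ⟨a, b, c⟩ h1 h2
    simp at h1 h2
    omega

lemma isRemovalTriple_of_lt_two_mul {m a b c : ℕ} (hma : m ≤ a) (hab : a < b) (hbc : b < c)
    (hc : c < 2 * m) : IsRemovalTriple m a b c := by
  refine ⟨hma, by omega, hab, hbc, fun p hp => ?_, fun p hp => ?_⟩ <;>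
  · rw [mem_Icc] at hp
    omega

lemma mem_exceptionalTriples_of_isRemovalTriple {m a b c : ℕ} (hm : 0 < m)
    (h : IsRemovalTriple m a b c) (hc : 2 * m ≤ c) : (a, b, c) ∈ exceptionalTriples m := by
  have hc4 := h.lt_two_mul_add_four hm
  obtain ⟨hma, ha, hab, hbc, hb, hc⟩ := h
  have h0 := hc.mem_or_mem (p := m) le_rfl (by omega)
  simp only [Set.mem_insert_iff, Set.mem_singleton_iff] at h0
  rw [mem_exceptionalTriples]
  obtain rfl | rfl | rfl | rfl : c = 2 * m ∨ c = 2 * m + 1 ∨ c = 2 * m + 2 ∨ c = 2 * m + 3 := by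
    omega
  · exact Or.inl ⟨by omega, by omega, by omega, rfl⟩
  · obtain rfl | rfl : a = m ∨ a = m + 1 := by omega
    · exact Or.inr (Or.inl ⟨rfl, by omega, by omega, rfl⟩)
    · refine Or.inr (Or.inr (Or.inl ⟨rfl, by omega, ?_, rfl⟩))
      by_contra! hb2
      have := hb.mem_or_mem (p := m) le_rfl (by omega)
      simp only [Set.mem_singleton_iff] at this
      omega
  all_goals
    have h1 := hc.mem_or_mem (p := m + 1) (by omega) (by omega)
    simp only [Set.mem_insert_iff, Set.mem_singleton_iff] at h1
  · obtain ⟨rfl, rfl⟩ | ⟨rfl, rfl⟩ : a = m ∧ b = m + 1 ∨ a = m + 1 ∧ b = m + 2 := by omega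
    · exact Or.inr (Or.inr (Or.inr (Or.inl ⟨rfl, rfl, rfl⟩)))
    · exact Or.inr (Or.inr (Or.inr (Or.inr (Or.inl ⟨rfl, rfl, rfl⟩))))
  · obtain ⟨rfl, rfl⟩ | ⟨rfl, rfl⟩ | ⟨rfl, rfl⟩ | ⟨rfl, rfl⟩ :
        a = m ∧ b = m + 1 ∨ a = m ∧ b = m + 2 ∨ a = m + 1 ∧ b = m + 3 ∨ a = m + 2 ∧ b = m + 3 := by
      omega
    all_goals simp

lemma isRemovalTriple_of_mem_exceptionalTriples {m a b c : ℕ} (hm : 4 ≤ m)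
    (h : (a, b, c) ∈ exceptionalTriples m) : IsRemovalTriple m a b c := by
  rw [mem_exceptionalTriples] at h
  rcases h with ⟨rfl, hb, hb', rfl⟩ | ⟨rfl, hb, hb', rfl⟩ | ⟨rfl, hb, hb', rfl⟩ | ⟨rfl, rfl, rfl⟩ |
    ⟨rfl, rfl, rfl⟩ | ⟨rfl, rfl, rfl⟩ | ⟨rfl, rfl, rfl⟩ | ⟨rfl, rfl, rfl⟩ | ⟨rfl, rfl, rfl⟩ <;>
  refine ⟨by omega, by omega, by omega, by omega, fun p hp => ?_, fun p hp => ?_⟩ <;>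
  · simp only [mem_Icc, Set.mem_insert_iff, Set.mem_singleton_iff] at hp ⊢
    omega

lemma removalTriples_eq {m : ℕ} (hm : 4 ≤ m) :
    removalTriples m =
      {x ∈ Ico m (2 * m) ×ˢ Ico m (2 * m) ×ˢ Ico m (2 * m) | x.1 < x.2.1 ∧ x.2.1 < x.2.2} ∪
        exceptionalTriples m := by
  ext ⟨a, b, c⟩
  simp only [mem_removalTriples (by omega : 0 < m), mem_union, mem_filter, mem_product, mem_Ico]
  constructor
  · intro h
    by_cases hc : c < 2 * m
    · obtain ⟨hma, -, hab, hbc, -, -⟩ := h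
      exact Or.inl ⟨⟨⟨hma, by omega⟩, ⟨by omega, by omega⟩, ⟨by omega, hc⟩⟩, hab, hbc⟩
    · exact Or.inr (mem_exceptionalTriples_of_isRemovalTriple (by omega) h (by omega))
  · rintro (⟨⟨⟨hma, -⟩, -, -, hc⟩, hab, hbc⟩ | h)
    · exact isRemovalTriple_of_lt_two_mul hma hab hbc hc
    · exact isRemovalTriple_of_mem_exceptionalTriples hm h

lemma card_removalTriples {m : ℕ} (hm : 4 ≤ m) :
    #(removalTriples m) = m.choose 3 + 3 * m + 3 := by
  rw [removalTriples_eq hm, card_union_of_disjoint, card_product_product_filter_lt, Nat.card_Ico,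
    card_exceptionalTriples (by omega), show 2 * m - m = m by omega, add_assoc]
  rw [disjoint_left]
  rintro ⟨a, b, c⟩ h1 h2
  rw [mem_exceptionalTriples] at h2
  simp only [mem_filter, mem_product, mem_Ico] at h1
  omega

lemma card_removalTriples_two : #(removalTriples 2) = 7 := by decide

set_option maxRecDepth 4000 in
lemma card_removalTriples_three : #(removalTriples 3) = 11 := by decide

theorem statement11_general (m : ℕ) :
    ((m = 2 ∨ m = 3) →
      {T : Set ℕ | IsGreatGrandchild T (({0} : Set ℕ) ∪ {n : ℕ | m ≤ n})}.ncard =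
        Nat.choose m 3 + 3 * m + 1) ∧
    (4 ≤ m →
      {T : Set ℕ | IsGreatGrandchild T (({0} : Set ℕ) ∪ {n : ℕ | m ≤ n})}.ncard =
        Nat.choose m 3 + 3 * m + 3) := by
  change ((m = 2 ∨ m = 3) → {T | IsGreatGrandchild T (ordinarySemigroup m)}.ncard = _) ∧
    (4 ≤ m → {T | IsGreatGrandchild T (ordinarySemigroup m)}.ncard = _)
  refine ⟨?_, fun hm => ?_⟩
  · rintro (rfl | rfl)
    · rw [ncard_greatGrandchildren_ordinarySemigroup two_pos, card_removalTriples_two]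
      rfl
    · rw [ncard_greatGrandchildren_ordinarySemigroup three_pos, card_removalTriples_three]
      rfl
  · rw [ncard_greatGrandchildren_ordinarySemigroup (by omega), card_removalTriples hm]

theorem statement11 (m : ℕ) (hm : 2 ≤ m) :
    ((m = 2 ∨ m = 3) →
      {T : Set ℕ | IsGreatGrandchild T (({0} : Set ℕ) ∪ {n : ℕ | m ≤ n})}.ncard =
        Nat.choose m 3 + 3 * m + 1) ∧
    (4 ≤ m →
      {T : Set ℕ | IsGreatGrandchild T (({0} : Set ℕ) ∪ {n : ℕ | m ≤ n})}.ncard =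
        Nat.choose m 3 + 3 * m + 3) :=
  statement11_general m
end
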